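/- In the setting of the two reduction orders of R·S·T, prove that if S_p + C_p - G_p - A_p > 0 then A_p = I_p. -/

import Mathlib

/-!
Every row produced by a vector insertion has capped partial sums `X_{p+1} = min(Z_p, X_p + w_{p+1})`.
Unfolding these recursions for `A`, `G`, `C` and `I` (with `H = R + S - G` componentwise) shows by
induction on `p` that `A_p + G_p = min(I_p + G_p, S_p + C_p)`. If the second term of the minimum is
the strictly larger one, the first is attained, which is `A_p = I_p`.
-/

open Finset

/-- Partial sum `Φ_p = φ_1 + ⋯ + φ_p` of a multiplicity vector. -/
def PS (f : ℕ → ℕ) (p : ℕ) : ℕ := ∑ i ∈ Finset.Icc 1 p, f i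

/-- Partial sums `X_p` of the bumped row in the vector insertion `W·Z = X·Y`:
`X_0 = X_1 = 0`, `X_{p+1} = min(Z_p, X_p + w_{p+1})`. -/
def capX (W Z : ℕ → ℕ) : ℕ → ℕ
  | 0 => 0
  | p + 1 => if p = 0 then 0 else min (PS Z p) (capX W Z p + W (p + 1))

/-- Component `x_p = X_p - X_{p-1} = min(Z_{p-1} - X_{p-1}, w_p)` (with `x_1 = 0`). -/
def xcomp (W Z : ℕ → ℕ) (p : ℕ) : ℕ := capX W Z p - capX W Z (p - 1)

/-- Component `y_q = w_q + z_q - x_q`. -/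
def ycomp (W Z : ℕ → ℕ) (q : ℕ) : ℕ := W q + Z q - xcomp W Z q

/-- `A` from `S·T = A·B`. -/
def rowA (S T : ℕ → ℕ) : ℕ → ℕ := xcomp S T
/-- `B` from `S·T = A·B`. -/
def rowB (S T : ℕ → ℕ) : ℕ → ℕ := ycomp S T
/-- `C` from `R·A = C·D`. -/
def rowC (R S T : ℕ → ℕ) : ℕ → ℕ := xcomp R (rowA S T)
/-- `D` from `R·A = C·D`. -/
def rowD (R S T : ℕ → ℕ) : ℕ → ℕ := ycomp R (rowA S T)
/-- `E` from `D·B = E·F`. -/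
def rowE (R S T : ℕ → ℕ) : ℕ → ℕ := xcomp (rowD R S T) (rowB S T)
/-- `F` from `D·B = E·F`. -/
def rowF (R S T : ℕ → ℕ) : ℕ → ℕ := ycomp (rowD R S T) (rowB S T)
/-- `G` from `R·S = G·H`. -/
def rowG (R S : ℕ → ℕ) : ℕ → ℕ := xcomp R S
/-- `H` from `R·S = G·H`. -/
def rowH (R S : ℕ → ℕ) : ℕ → ℕ := ycomp R S
/-- `I` from `H·T = I·J`. -/
def rowI (R S T : ℕ → ℕ) : ℕ → ℕ := xcomp (rowH R S) T
/-- `J` from `H·T = I·J`. -/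
def rowJ (R S T : ℕ → ℕ) : ℕ → ℕ := ycomp (rowH R S) T
/-- `K` from `G·I = K·L`. -/
def rowK (R S T : ℕ → ℕ) : ℕ → ℕ := xcomp (rowG R S) (rowI R S T)
/-- `L` from `G·I = K·L`. -/
def rowL (R S T : ℕ → ℕ) : ℕ → ℕ := ycomp (rowG R S) (rowI R S T)

lemma PS_add_one (f : ℕ → ℕ) (p : ℕ) : PS f (p + 1) = PS f p + f (p + 1) :=
  Finset.sum_Icc_succ_top (Nat.le_add_left 1 p) f

lemma capX_add_one {W Z : ℕ → ℕ} {p : ℕ} (hp : p ≠ 0) :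
    capX W Z (p + 1) = min (PS Z p) (capX W Z p + W (p + 1)) := by
  rw [capX, if_neg hp]

lemma capX_le_PS (W Z : ℕ → ℕ) (p : ℕ) : capX W Z p ≤ PS Z p := by
  induction p with
  | zero => rfl
  | succ p ih =>
    rcases eq_or_ne p 0 with rfl | hp
    · exact Nat.zero_le _
    · rw [capX_add_one hp, PS_add_one]
      exact (min_le_left _ _).trans (Nat.le_add_right _ _)

lemma capX_le_capX_add_one (W Z : ℕ → ℕ) (p : ℕ) : capX W Z p ≤ capX W Z (p + 1) := by
  rcases eq_or_ne p 0 with rfl | hp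
  · rfl
  · rw [capX_add_one hp]
    exact le_min (capX_le_PS W Z p) (Nat.le_add_right _ _)

lemma PS_xcomp (W Z : ℕ → ℕ) (p : ℕ) : PS (xcomp W Z) p = capX W Z p := by
  induction p with
  | zero => rfl
  | succ p ih =>
    rw [PS_add_one, ih, xcomp, Nat.add_sub_cancel]
    exact Nat.add_sub_of_le (capX_le_capX_add_one W Z p)

theorem PS_rowA_add_PS_rowG_eq_min (R S T : ℕ → ℕ) (p : ℕ) :
    PS (rowA S T) p + PS (rowG R S) p =
      min (PS (rowI R S T) p + PS (rowG R S) p) (PS S p + PS (rowC R S T) p) := by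
  simp only [rowA, rowG, rowC, rowI, PS_xcomp]
  induction p with
  | zero => rfl
  | succ q ih =>
    rcases eq_or_ne q 0 with rfl | hq
    · rfl
    have hC : capX R (xcomp S T) q ≤ capX S T q := PS_xcomp S T q ▸ capX_le_PS _ _ q
    have eC : capX R (xcomp S T) (q + 1) =
        min (capX S T q) (capX R (xcomp S T) q + R (q + 1)) := by
      rw [capX_add_one hq, PS_xcomp]
    have eH : rowH R S (q + 1) = R (q + 1) + S (q + 1) - (capX R S (q + 1) - capX R S q) := rfl
    have hA := capX_le_PS S T q
    have hG := capX_le_PS R S q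
    have hI := capX_le_PS (rowH R S) T q
    rw [capX_add_one hq, eC, capX_add_one hq (W := rowH R S), eH, capX_add_one hq (W := R),
      PS_add_one]
    omega

/-- If `S_p + C_p - G_p - A_p > 0` then `A_p = I_p`. -/
theorem A_eq_I_of_strict (n : ℕ) (R S T : ℕ → ℕ) :
    ∀ p, 1 ≤ p → p ≤ n →
      PS (rowG R S) p + PS (rowA S T) p < PS S p + PS (rowC R S T) p →
      PS (rowA S T) p = PS (rowI R S T) p := by
  intro p _ _ hlt
  have := PS_rowA_add_PS_rowG_eq_min R S T p
  omega
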